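/- arXiv:1304.5609 — 3 statements merged into one kernel-verified Lean document; each statement's English description precedes it below -/
import Mathlib

section
/- Let N and M be (not necessarily commutative) rings and let e₁, e₂ ∈ N satisfy e₁ + e₂ = 1. Let J : N → M be an additive map such that for all x, y ∈ N one has J(e₁·x)·J(e₁·y) = J(e₁·(x·y)), J(e₂·x)·J(e₂·y) = J(e₂·(y·x)), and J(e₁·x)·J(e₂·y) = 0 = J(e₂·x)·J(e₁·y). Then for every two-sided ideal A of N the image J(A) is a two-sided ideal of the subring J(N): for all a ∈ A and b, c ∈ N, the products J(b)·J(a), J(a)·J(b) and J(b)·J(a)·J(c) all belong to J(A). -/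
/-- Lemma 2.5 of the paper, algebraic form.
If `J : N →+ M` is additive with a Størmer-type decomposition relative to
`e₁ + e₂ = 1` (`x ↦ J (e₁ * x)` multiplicative, `x ↦ J (e₂ * x)` anti-multiplicative,
mixed products vanishing), then the image of a two-sided ideal `A` of `N` is a
two-sided ideal of the subring `J(N)`. -/
theorem stmt0 {N M : Type*} [Ring N] [Ring M]
    (e₁ e₂ : N) (he : e₁ + e₂ = 1)
    (J : N →+ M)
    (h1 : ∀ x y : N, J (e₁ * x) * J (e₁ * y) = J (e₁ * (x * y)))
    (h2 : ∀ x y : N, J (e₂ * x) * J (e₂ * y) = J (e₂ * (y * x)))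
    (h12 : ∀ x y : N, J (e₁ * x) * J (e₂ * y) = 0)
    (h21 : ∀ x y : N, J (e₂ * x) * J (e₁ * y) = 0)
    (A : TwoSidedIdeal N) :
    ∀ a ∈ A, ∀ b c : N,
      J b * J a ∈ J '' (A : Set N) ∧
      J a * J b ∈ J '' (A : Set N) ∧
      J b * J a * J c ∈ J '' (A : Set N) := by
  have hsplit : ∀ x : N, J x = J (e₁ * x) + J (e₂ * x) := by
    intro x
    rw [← map_add, ← add_mul, he, one_mul]
  have hprod : ∀ x y : N, J x * J y = J (e₁ * (x * y) + e₂ * (y * x)) := by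
    intro x y
    rw [hsplit x, hsplit y, map_add, add_mul, mul_add, mul_add,
      h1, h2, h12, h21, zero_add, add_zero]
  have key : ∀ a ∈ A, ∀ b : N, e₁ * (b * a) + e₂ * (a * b) ∈ A ∧
      e₁ * (a * b) + e₂ * (b * a) ∈ A := by
    intro a ha b
    exact ⟨A.add_mem (A.mul_mem_left _ _ (A.mul_mem_left _ _ ha))
        (A.mul_mem_left _ _ (A.mul_mem_right _ _ ha)),
      A.add_mem (A.mul_mem_left _ _ (A.mul_mem_right _ _ ha))
        (A.mul_mem_left _ _ (A.mul_mem_left _ _ ha))⟩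
  intro a ha b c
  refine ⟨⟨_, (key a ha b).1, (hprod b a).symm⟩,
    ⟨_, (key a ha b).2, (hprod a b).symm⟩, ?_⟩
  obtain ⟨h1', h2'⟩ := key a ha b
  refine ⟨_, (key _ h1' c).2, ?_⟩
  rw [← hprod, ← hprod]
end

section
/- Let G be a topological group, E a normed vector space over ℝ, and π a group homomorphism from G into the group of bijective linear isometries of E. Let Z be a finite subgroup of G contained in the center of G. Let (vₙ)ₙ be a sequence in E with ‖vₙ‖ = 1 for all n, such that for every compact subset K ⊆ G and every ε > 0, for all sufficiently large n one has ‖π(g)vₙ − vₙ‖ < ε for all g ∈ K. Define wₙ = |Z|⁻¹ · Σ_{z ∈ Z} π(z)vₙ. Then: (i) π(z)wₙ = wₙ for every z ∈ Z and every n; (ii) ‖wₙ‖ → 1 as n → ∞; (iii) for every compact K ⊆ G and every ε > 0, for all sufficiently large n one has ‖π(g)wₙ − wₙ‖ < ε for all g ∈ K. -/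
open Filter

/-- averaging over a finite central subgroup, from the proof of
Lemma 3.1 of the paper.  Averaging a sequence of almost invariant unit vectors over
a finite central subgroup `Z` produces `Z`-invariant vectors whose norms tend to `1`
and which are still almost invariant. -/
theorem stmt2 {G : Type*} [Group G] [TopologicalSpace G]
    {E : Type*} [NormedAddCommGroup E] [NormedSpace ℝ E]
    (π : G →* (E ≃ₗᵢ[ℝ] E))
    (Z : Subgroup G) [Fintype Z] (hZ : Z ≤ Subgroup.center G)
    (v : ℕ → E) (hv : ∀ n, ‖v n‖ = 1)
    (hinv : ∀ K : Set G, IsCompact K → ∀ ε > 0, ∃ N : ℕ, ∀ n ≥ N, ∀ g ∈ K,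
      ‖π g (v n) - v n‖ < ε)
    (w : ℕ → E)
    (hw : ∀ n, w n = ((Fintype.card Z : ℝ))⁻¹ • ∑ z : Z, π (z : G) (v n)) :
    (∀ z ∈ Z, ∀ n, π z (w n) = w n) ∧
    Tendsto (fun n => ‖w n‖) atTop (nhds 1) ∧
    (∀ K : Set G, IsCompact K → ∀ ε > 0, ∃ N : ℕ, ∀ n ≥ N, ∀ g ∈ K,
      ‖π g (w n) - w n‖ < ε) := by
  classical
  set c : ℝ := ((Fintype.card Z : ℝ))⁻¹ with hc
  have hcardpos : (0:ℝ) < (Fintype.card Z : ℝ) := by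
    exact_mod_cast Fintype.card_pos
  have hcpos : 0 < c := by positivity
  -- Part 1
  have h1 : ∀ z ∈ Z, ∀ n, π z (w n) = w n := by
    intro z hz n
    rw [hw, map_smul]
    congr 1
    rw [map_sum]
    have step : ∀ z' : Z, π z (π (z' : G) (v n)) = π (((⟨z, hz⟩ : Z) * z' : Z) : G) (v n) := by
      intro z'
      simp [map_mul]
    calc ∑ z' : Z, π z (π (z' : G) (v n))
        = ∑ z' : Z, π (((⟨z, hz⟩ : Z) * z' : Z) : G) (v n) :=
          Finset.sum_congr rfl fun z' _ => step z'
      _ = ∑ z' : Z, π (z' : G) (v n) :=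
          Equiv.sum_comp (Equiv.mulLeft (⟨z, hz⟩ : Z)) (fun z' : Z => π (z' : G) (v n))
  -- difference formula
  have hdiff : ∀ n, w n - v n = c • ∑ z : Z, (π (z : G) (v n) - v n) := by
    intro n
    rw [hw, Finset.sum_sub_distrib, smul_sub]
    congr 1
    rw [Finset.sum_const, Finset.card_univ, ← Nat.cast_smul_eq_nsmul ℝ, smul_smul,
      hc, inv_mul_cancel₀ hcardpos.ne', one_smul]
  -- smallness of the difference
  have hZc : IsCompact ((Z : Set G)) := (Set.toFinite _).isCompact
  have hsmall : ∀ ε > 0, ∃ N, ∀ n ≥ N, ‖w n - v n‖ < ε := by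
    intro ε hε
    obtain ⟨N, hN⟩ := hinv (Z : Set G) hZc ε hε
    refine ⟨N, fun n hn => ?_⟩
    rw [hdiff, norm_smul, Real.norm_eq_abs, abs_of_pos hcpos]
    have hsum : ‖∑ z : Z, (π (z : G) (v n) - v n)‖ < (Fintype.card Z : ℝ) * ε := by
      calc ‖∑ z : Z, (π (z : G) (v n) - v n)‖
          ≤ ∑ z : Z, ‖π (z : G) (v n) - v n‖ := norm_sum_le _ _
        _ < ∑ _z : Z, ε := by
            refine Finset.sum_lt_sum_of_nonempty Finset.univ_nonempty ?_
            intro z _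
            exact hN n hn (z : G) z.2
        _ = (Fintype.card Z : ℝ) * ε := by
            rw [Finset.sum_const, Finset.card_univ, nsmul_eq_mul]
    calc c * ‖∑ z : Z, (π (z : G) (v n) - v n)‖
        < c * ((Fintype.card Z : ℝ) * ε) := by
          exact mul_lt_mul_of_pos_left hsum hcpos
      _ = ε := by
          rw [hc, ← mul_assoc, inv_mul_cancel₀ hcardpos.ne', one_mul]
  -- the difference tends to zero
  have hto0 : Tendsto (fun n => ‖w n - v n‖) atTop (nhds 0) := by
    rw [Metric.tendsto_atTop]
    intro ε hε
    obtain ⟨N, hN⟩ := hsmall ε hε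
    refine ⟨N, fun n hn => ?_⟩
    rw [Real.dist_eq, sub_zero, abs_of_nonneg (norm_nonneg _)]
    exact hN n hn
  -- Part 2
  have h2 : Tendsto (fun n => ‖w n‖) atTop (nhds 1) := by
    rw [← tendsto_sub_nhds_zero_iff]
    refine squeeze_zero_norm (fun n => ?_) hto0
    rw [Real.norm_eq_abs]
    calc |‖w n‖ - 1| = |‖w n‖ - ‖v n‖| := by rw [hv n]
      _ ≤ ‖w n - v n‖ := abs_norm_sub_norm_le _ _
  refine ⟨h1, h2, ?_⟩
  -- Part 3
  intro K hK ε hε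
  obtain ⟨N1, hN1⟩ := hinv K hK (ε / 3) (by positivity)
  obtain ⟨N2, hN2⟩ := hsmall (ε / 3) (by positivity)
  refine ⟨max N1 N2, fun n hn g hg => ?_⟩
  have e1 := hN1 n (le_trans (le_max_left _ _) hn) g hg
  have e2 := hN2 n (le_trans (le_max_right _ _) hn)
  have key : π g (w n) - w n = π g (w n - v n) + ((π g (v n) - v n) + (v n - w n)) := by
    rw [map_sub]; abel
  calc ‖π g (w n) - w n‖
      ≤ ‖π g (w n - v n)‖ + (‖π g (v n) - v n‖ + ‖v n - w n‖) := by
        rw [key]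
        exact le_trans (norm_add_le _ _) (by gcongr; exact norm_add_le _ _)
    _ = ‖w n - v n‖ + (‖π g (v n) - v n‖ + ‖w n - v n‖) := by
        rw [(π g).norm_map, norm_sub_rev (v n)]
    _ < ε / 3 + (ε / 3 + ε / 3) := by gcongr
    _ = ε := by ring
end

section
/- Let G be a topological group and let p be a real number with 1 ≤ p < ∞. For each n ∈ ℕ let Eₙ be a normed vector space over ℝ, let πₙ be a group homomorphism from G into the group of bijective linear isometries of Eₙ, and let wₙ ∈ Eₙ. Assume: (a) for every g ∈ G the family (πₙ(g)wₙ − wₙ)ₙ lies in the ℓ^p-direct sum ⊕ₙ^p Eₙ, i.e. Σₙ ‖πₙ(g)wₙ − wₙ‖^p < ∞, so that b(g) := (πₙ(g)wₙ − wₙ)ₙ is a well-defined element of ⊕ₙ^p Eₙ; and (b) there exists C > 0 such that for every n, eventually along the cocompact filter of G one has ‖πₙ(g)wₙ − wₙ‖ ≥ C. Then b satisfies the coordinatewise cocycle identity (b(g·h))ₙ = πₙ(g)((b(h))ₙ) + (b(g))ₙ for all g, h ∈ G and all n, and b is proper: ‖b(g)‖_{ℓ^p} → ∞ along the cocompact filter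 of G. -/
open Filter

/-- the core construction in the proof of Theorem 5.1 of the
paper.  Given representations `πₙ` by bijective linear isometries of normed spaces
`Eₙ` and vectors `wₙ` whose displacements `πₙ(g)wₙ - wₙ` are `p`-summable for each
`g` and eventually bounded below in norm by some `C > 0` at infinity, the map
`b(g) = (πₙ(g)wₙ - wₙ)ₙ ∈ ⊕ₙ^p Eₙ` satisfies the coordinatewise cocycle identity
and is proper. -/
theorem stmt13 {G : Type*} [Group G] [TopologicalSpace G]
    (p : ℝ) (hp : 1 ≤ p)
    (E : ℕ → Type*) [∀ n, NormedAddCommGroup (E n)] [∀ n, NormedSpace ℝ (E n)]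
    (π : ∀ n : ℕ, G →* (E n ≃ₗᵢ[ℝ] E n))
    (w : ∀ n : ℕ, E n)
    (hmem : ∀ g : G, Memℓp (fun n => π n g (w n) - w n) (ENNReal.ofReal p))
    (C : ℝ) (hC : 0 < C)
    (hbig : ∀ n : ℕ, ∀ᶠ g in cocompact G, C ≤ ‖π n g (w n) - w n‖) :
    (∀ g h : G, ∀ n : ℕ,
      π n (g * h) (w n) - w n = π n g (π n h (w n) - w n) + (π n g (w n) - w n)) ∧
    Tendsto
      (fun g => ‖(⟨fun n => π n g (w n) - w n, hmem g⟩ : lp E (ENNReal.ofReal p))‖)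
      (cocompact G) atTop := by
  have hp0 : 0 < p := lt_of_lt_of_le one_pos hp
  have htp : (ENNReal.ofReal p).toReal = p := ENNReal.toReal_ofReal hp0.le
  constructor
  · intro g h n
    have : π n (g * h) = π n g * π n h := map_mul (π n) g h
    rw [this]
    simp [LinearIsometryEquiv.map_sub]
  · rw [tendsto_atTop]
    intro M
    set M' := max M 0 with hM'
    obtain ⟨N, hN⟩ : ∃ N : ℕ, M' ^ p ≤ N * C ^ p := by
      obtain ⟨N, hN⟩ := exists_nat_ge (M' ^ p / C ^ p)
      exact ⟨N, (div_le_iff₀ (Real.rpow_pos_of_pos hC p)).mp hN⟩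
    have hev : ∀ᶠ g in cocompact G, ∀ n ∈ Finset.range N,
        C ≤ ‖π n g (w n) - w n‖ :=
      (Finset.range N).eventually_all.2 fun n _ => hbig n
    filter_upwards [hev] with g hg
    set f : lp E (ENNReal.ofReal p) := ⟨fun n => π n g (w n) - w n, hmem g⟩
    have hsum : ∑ n ∈ Finset.range N, ‖f n‖ ^ p ≤ ‖f‖ ^ p := by
      have := lp.sum_rpow_le_norm_rpow (p := ENNReal.ofReal p)
        (by rw [htp]; exact hp0) f (Finset.range N)
      rwa [htp] at this
    have hlow : M' ^ p ≤ ‖f‖ ^ p := by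
      refine hN.trans (le_trans ?_ hsum)
      calc (N : ℝ) * C ^ p = ∑ _n ∈ Finset.range N, C ^ p := by
            simp [Finset.sum_const, mul_comm]
        _ ≤ ∑ n ∈ Finset.range N, ‖f n‖ ^ p :=
            Finset.sum_le_sum fun n hn =>
              Real.rpow_le_rpow hC.le (hg n hn) hp0.le
    have : M' ≤ ‖f‖ := by
      by_contra hcon
      push_neg at hcon
      exact absurd (Real.rpow_lt_rpow (lp.norm_nonneg' f) hcon hp0) (not_lt.2 hlow)
    exact le_trans (le_max_left M 0) this
end
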